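/- Let p > 1, λ > 0, ρ = λ^{1/p}, and let q be continuous on [0,1]. If y is a nontrivial solution of -((y')^{(p-1)})' = (p-1)(λ - q(x)) y^{(p-1)} with y(0)=0, written in Prüfer form y = R S_p(φ), y' = ρ R S_p'(φ), R > 0, φ(0)=0, then R'(x)/R(x) = (q(x)/ρ^{p-1}) S_p(φ(x))^{p-1} S_p'(φ(x)), where S_p(φ)^{p-1} denotes |S_p(φ)|^{p-2} S_p(φ). -/

import Mathlib

/-!
Along a solution of the half-linear equation the energy `|y'|^p + λ|y|^p` has derivative
`p q y^(p-1) y'`. The generalized Pythagorean identity `|S_p|^p + |S_p'|^p = 1`, itself the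
constancy of the energy of `S_p`, turns the energy in Prüfer variables into `λ R^p`, whose
derivative is `λ p R^(p-1) R'`. Equating the two derivatives and substituting
`y = R S_p(φ)`, `y' = ρ R S_p'(φ)`, `λ = ρ^p` gives the radius equation.
-/

open Real

section SignedPower

variable {p : ℝ}

lemma abs_abs_rpow_sub_two_mul_self (hp : p ≠ 1) (s : ℝ) :
    |(|s| ^ (p - 2) * s)| = |s| ^ (p - 1) := by
  rcases eq_or_ne s 0 with rfl | hs
  · simp [zero_rpow (sub_ne_zero.2 hp)]
  · rw [abs_mul, abs_of_nonneg (rpow_nonneg (abs_nonneg s) _), show p - 1 = p - 2 + 1 by ring,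
      rpow_add_one (abs_ne_zero.2 hs)]

lemma abs_mul_rpow_sub_two_mul_mul_of_pos {R : ℝ} (hR : 0 < R) (s : ℝ) :
    |R * s| ^ (p - 2) * (R * s) = R ^ (p - 1) * (|s| ^ (p - 2) * s) := by
  rw [abs_mul, abs_of_pos hR, mul_rpow hR.le (abs_nonneg s), show p - 1 = p - 2 + 1 by ring,
    rpow_add_one hR.ne']
  ring

lemma abs_rpow_conj_abs_rpow_sub_two_mul_self (hp : 1 < p) (s : ℝ) :
    |(|s| ^ (p - 2) * s)| ^ (p / (p - 1)) = |s| ^ p := by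
  have hp1 : 0 < p - 1 := by linarith
  rw [abs_abs_rpow_sub_two_mul_self hp.ne' s, ← rpow_mul (abs_nonneg s)]
  field_simp

/-- The signed powers with exponents `p` and `p / (p - 1)` are mutually inverse. -/
lemma abs_rpow_conj_sub_two_mul_abs_rpow_sub_two_mul_self (hp : 1 < p) (s : ℝ) :
    |(|s| ^ (p - 2) * s)| ^ (p / (p - 1) - 2) * (|s| ^ (p - 2) * s) = s := by
  have hp1 : 0 < p - 1 := by linarith
  rcases eq_or_ne s 0 with rfl | hs
  · simp
  · rw [abs_abs_rpow_sub_two_mul_self hp.ne' s, ← rpow_mul (abs_nonneg s),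
      show (p - 1) * (p / (p - 1) - 2) = 2 - p by field_simp; ring, ← mul_assoc,
      ← rpow_add (abs_pos.2 hs), show 2 - p + (p - 2) = 0 by ring, rpow_zero, one_mul]

end SignedPower

section Derivatives

variable {p : ℝ} {x : ℝ}

lemma HasDerivAt.abs_rpow (hp : 1 < p) {f : ℝ → ℝ} {f' : ℝ} (hf : HasDerivAt f f' x) :
    HasDerivAt (fun t => |f t| ^ p) (p * (|f x| ^ (p - 2) * f x) * f') x :=
  ((hasDerivAt_abs_rpow (f x) hp).comp x hf).congr_deriv (by ring)

/-- Only the signed power `w = |v| ^ (p - 2) * v` needs to be differentiable, not `v`: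
`|v| ^ p = |w| ^ (p / (p - 1))`. -/
lemma HasDerivAt.abs_rpow_of_signedPow (hp : 1 < p) {v : ℝ → ℝ} {w' : ℝ}
    (hw : HasDerivAt (fun t => |v t| ^ (p - 2) * v t) w' x) :
    HasDerivAt (fun t => |v t| ^ p) (p / (p - 1) * v x * w') x := by
  have hp1 : 0 < p - 1 := by linarith
  have hconj : 1 < p / (p - 1) := by rw [lt_div_iff₀ hp1]; linarith
  have h := hw.abs_rpow hconj
  simp only [abs_rpow_conj_abs_rpow_sub_two_mul_self hp,
    abs_rpow_conj_sub_two_mul_abs_rpow_sub_two_mul_self hp] at h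
  exact h.congr_deriv (by ring)

/-- Energy identity for the half-linear equation `-((y')^(p-1))' = (p-1) g y^(p-1)`. -/
theorem hasDerivAt_halfLinear_energy (hp : 1 < p) (c g : ℝ) {y yd : ℝ → ℝ}
    (hy : HasDerivAt y (yd x) x)
    (hode : HasDerivAt (fun t => |yd t| ^ (p - 2) * yd t)
      (-(p - 1) * g * (|y x| ^ (p - 2) * y x)) x) :
    HasDerivAt (fun t => |yd t| ^ p + c * |y t| ^ p)
      (p * (c - g) * (|y x| ^ (p - 2) * y x) * yd x) x := by
  have hp1 : p - 1 ≠ 0 := by linarith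
  refine ((hode.abs_rpow_of_signedPow hp).add ((hy.abs_rpow hp).const_mul c)).congr_deriv ?_
  field_simp
  ring

end Derivatives

theorem abs_rpow_add_abs_rpow_eq_one_of_sine {p : ℝ} (hp : 1 < p) {Sp Sp' : ℝ → ℝ}
    (hSpderiv : ∀ x : ℝ, HasDerivAt Sp (Sp' x) x)
    (hSpode : ∀ x : ℝ, HasDerivAt (fun t => |Sp' t| ^ (p - 2) * Sp' t)
      (-(p - 1) * (|Sp x| ^ (p - 2) * Sp x)) x)
    (hSp0 : Sp 0 = 0) (hSp1 : Sp' 0 = 1) (t : ℝ) :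
    |Sp t| ^ p + |Sp' t| ^ p = 1 := by
  have hconst : ∀ u, HasDerivAt (fun s => |Sp' s| ^ p + 1 * |Sp s| ^ p) 0 u := fun u => by
    simpa using hasDerivAt_halfLinear_energy hp 1 1 (hSpderiv u) (by simpa using hSpode u)
  have h := is_const_of_deriv_eq_zero (fun u => (hconst u).differentiableAt)
    (fun u => (hconst u).deriv) t 0
  simp only [one_mul, hSp0, hSp1, abs_zero, abs_one, one_rpow,
    zero_rpow (show p ≠ 0 by positivity)] at h
  linarith

lemma abs_mul_mul_rpow_add_rpow_mul_abs_mul_rpow {p ρ R : ℝ} (hρ : 0 ≤ ρ) (hR : 0 ≤ R)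
    (a b : ℝ) :
    |ρ * R * b| ^ p + ρ ^ p * |R * a| ^ p = ρ ^ p * R ^ p * (|a| ^ p + |b| ^ p) := by
  simp only [abs_mul, abs_of_nonneg hρ, abs_of_nonneg hR,
    mul_rpow (mul_nonneg hρ hR) (abs_nonneg _), mul_rpow hρ hR, mul_rpow hR (abs_nonneg _)]
  ring

theorem prufer_radius_equation_general
    (p lam ρ : ℝ) (hp : 1 < p) (hlam : 0 < lam) (hρ : ρ = lam ^ (1 / p))
    (q : ℝ → ℝ)
    (Sp Sp' : ℝ → ℝ)
    (hSpderiv : ∀ x : ℝ, HasDerivAt Sp (Sp' x) x)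
    (hSpode : ∀ x : ℝ, HasDerivAt (fun t => |Sp' t| ^ (p - 2) * Sp' t)
      (-(p - 1) * (|Sp x| ^ (p - 2) * Sp x)) x)
    (hSp0 : Sp 0 = 0) (hSp1 : Sp' 0 = 1)
    (y yd R Rd φ : ℝ → ℝ)
    (hy : ∀ x ∈ Set.Icc (0:ℝ) 1, HasDerivAt y (yd x) x)
    (hode : ∀ x ∈ Set.Icc (0:ℝ) 1, HasDerivAt (fun t => |yd t| ^ (p - 2) * yd t)
      (-(p - 1) * (lam - q x) * (|y x| ^ (p - 2) * y x)) x)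
    (hRpos : ∀ x ∈ Set.Icc (0:ℝ) 1, 0 < R x)
    (hrep : ∀ x ∈ Set.Icc (0:ℝ) 1, y x = R x * Sp (φ x) ∧ yd x = ρ * R x * Sp' (φ x))
    (hRd : ∀ x ∈ Set.Icc (0:ℝ) 1, HasDerivAt R (Rd x) x) :
    ∀ x ∈ Set.Icc (0:ℝ) 1,
      Rd x / R x = q x / ρ ^ (p - 1) * (|Sp (φ x)| ^ (p - 2) * Sp (φ x)) * Sp' (φ x) := by
  intro x hx
  have hρpos : 0 < ρ := hρ ▸ rpow_pos_of_pos hlam _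
  have hρp : ρ ^ p = lam := by
    rw [hρ, ← rpow_mul hlam.le, one_div_mul_cancel (by positivity), rpow_one]
  have hR := hRpos x hx
  -- On `[0, 1]` the energy `|y'|^p + λ|y|^p` equals `λ R^p`; differentiate both sides.
  have henergy : Set.EqOn (fun t => |yd t| ^ p + lam * |y t| ^ p) (fun t => lam * R t ^ p)
      (Set.Icc 0 1) := fun t ht => by
    obtain ⟨hyt, hydt⟩ := hrep t ht
    simp only [hyt, hydt, ← hρp, abs_mul_mul_rpow_add_rpow_mul_abs_mul_rpow hρpos.le
      (hRpos t ht).le,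
      abs_rpow_add_abs_rpow_eq_one_of_sine hp hSpderiv hSpode hSp0 hSp1, mul_one]
  have hderiv := (uniqueDiffOn_Icc zero_lt_one x hx).eq_deriv _
    ((hasDerivAt_halfLinear_energy hp lam (lam - q x) (hy x hx) (hode x hx)).hasDerivWithinAt)
    ((((hRd x hx).rpow_const (Or.inl hR.ne')).const_mul lam).hasDerivWithinAt.congr henergy
      (henergy hx))
  obtain ⟨hyx, hydx⟩ := hrep x hx
  rw [hyx, hydx, abs_mul_rpow_sub_two_mul_mul_of_pos hR, ← hρp,
    show ρ ^ p = ρ ^ (p - 1) * ρ by rw [← rpow_add_one hρpos.ne', sub_add_cancel]] at hderiv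
  have hρp1 : 0 < ρ ^ (p - 1) := rpow_pos_of_pos hρpos _
  have hRp1 : 0 < R x ^ (p - 1) := rpow_pos_of_pos hR _
  field_simp
  apply mul_left_cancel₀ (show p * ρ * R x ^ (p - 1) ≠ 0 by positivity)
  linear_combination -hderiv

/-- the Prüfer radius equation R'/R = (q/ρ^{p-1}) S_p(φ)^{(p-1)} S_p'(φ). -/
theorem prufer_radius_equation
    (p lam ρ : ℝ) (hp : 1 < p) (hlam : 0 < lam) (hρ : ρ = lam ^ (1 / p))
    (q : ℝ → ℝ) (hq : ContinuousOn q (Set.Icc 0 1))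
    (Sp Sp' : ℝ → ℝ)
    (hSpderiv : ∀ x : ℝ, HasDerivAt Sp (Sp' x) x)
    (hSpode : ∀ x : ℝ, HasDerivAt (fun t => |Sp' t| ^ (p - 2) * Sp' t)
      (-(p - 1) * (|Sp x| ^ (p - 2) * Sp x)) x)
    (hSp0 : Sp 0 = 0) (hSp1 : Sp' 0 = 1)
    (y yd R Rd φ : ℝ → ℝ)
    (hy : ∀ x ∈ Set.Icc (0:ℝ) 1, HasDerivAt y (yd x) x)
    (hode : ∀ x ∈ Set.Icc (0:ℝ) 1, HasDerivAt (fun t => |yd t| ^ (p - 2) * yd t)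
      (-(p - 1) * (lam - q x) * (|y x| ^ (p - 2) * y x)) x)
    (hnt : ∃ x ∈ Set.Icc (0:ℝ) 1, y x ≠ 0)
    (hy0 : y 0 = 0)
    (hRpos : ∀ x ∈ Set.Icc (0:ℝ) 1, 0 < R x)
    (hrep : ∀ x ∈ Set.Icc (0:ℝ) 1, y x = R x * Sp (φ x) ∧ yd x = ρ * R x * Sp' (φ x))
    (hφ0 : φ 0 = 0)
    (hRd : ∀ x ∈ Set.Icc (0:ℝ) 1, HasDerivAt R (Rd x) x) :
    ∀ x ∈ Set.Icc (0:ℝ) 1,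
      Rd x / R x = q x / ρ ^ (p - 1) * (|Sp (φ x)| ^ (p - 2) * Sp (φ x)) * Sp' (φ x) :=
  prufer_radius_equation_general p lam ρ hp hlam hρ q Sp Sp' hSpderiv hSpode hSp0 hSp1 y yd R Rd φ
    hy hode hRpos hrep hRd
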